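/- arXiv:2304.08747 — 3 statements merged into one kernel-verified Lean document; each statement's English description precedes it below -/
import Mathlib

section
/- Lemma 4, first claim (the set B is a basis). With the field tower of the context, let l = s̄^{n̄} ∏_{e=1}^{n̄} p_e, and identify each index i ∈ {0,…,l−1} with a tuple ((i_e)_{1≤e≤n̄}, (i'_e)_{1≤e≤n̄}) where 0 ≤ i_e ≤ p_e − 1 and 0 ≤ i'_e ≤ s̄ − 1. For each i, let 𝓔_i = {e ∈ {1,…,n̄} : (i_e, i'_e) = (p_e − 1, s̄ − 1)} and define b_i = (∏_{x=1}^{n̄} α_x^{u i_x}) · (∏_{y∈𝓔_i} ∑_{j=0}^{s̄−1} β_y^j) · (∏_{y∉𝓔_i} β_y^{i'_y}). Then B = {b_i : 0 ≤ i ≤ l−1} is an F-basis of K = K_{n̄}. -/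
/-! Each step `K_{e-1} ≤ K_e` of the tower has the `K_{e-1}`-basis `α_e^{u i} β_e^j` (tower law),
and replacing its single element `α_e^{u(p_e-1)} β_e^{s̄-1}` by `α_e^{u(p_e-1)} ∑_j β_e^j` is a
unitriangular change of basis. Multiplying these level bases along the tower, again by the tower
law, gives the `F`-basis `B` of `K`. -/

open Finset

theorem Finset.sum_mul_update {R ι : Type*} [Semiring R] [Fintype ι] [DecidableEq ι]
    (c g : ι → R) (k₀ : ι) (y : R) :
    ∑ k, c k * Function.update g k₀ y k = ∑ k, Function.update c k₀ 0 k * g k + c k₀ * y := by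
  rw [← add_sum_erase _ _ (mem_univ k₀), ← add_sum_erase _ _ (mem_univ k₀)]
  simp only [Function.update_self, zero_mul, zero_add]
  rw [add_comm]
  congr 1
  refine sum_congr rfl fun k hk => ?_
  simp [Function.update_of_ne (ne_of_mem_erase hk)]

section RelBasis

variable {F Ω : Type*} [Field F] [Field Ω] [Algebra F Ω] {ι ι' κ : Type*}
  [Fintype ι] [Fintype ι'] [Fintype κ]

/-- `g` is a basis of `M` over its subfield `L`, with coefficients taken inside `Ω`. -/
structure IsRelBasis (L M : IntermediateField F Ω) (g : ι → Ω) : Prop where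
  le : L ≤ M
  mem : ∀ i, g i ∈ M
  eq_zero_of_sum_eq_zero : ∀ c : ι → Ω, (∀ i, c i ∈ L) → ∑ i, c i * g i = 0 → ∀ i, c i = 0
  exists_sum_eq : ∀ x ∈ M, ∃ c : ι → Ω, (∀ i, c i ∈ L) ∧ x = ∑ i, c i * g i

namespace IsRelBasis

variable {L L' M : IntermediateField F Ω}

theorem of_unique [Unique ι] (L : IntermediateField F Ω) : IsRelBasis L L (fun _ : ι => 1) where
  le := le_rfl
  mem _ := one_mem L
  eq_zero_of_sum_eq_zero c _ hc i := by simpa [Subsingleton.elim i default] using hc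
  exists_sum_eq x hx := ⟨fun _ => x, fun _ => hx, by simp⟩

theorem comp_equiv {g : ι → Ω} (hg : IsRelBasis L M g) (e : ι' ≃ ι) :
    IsRelBasis L M (g ∘ e) where
  le := hg.le
  mem i := hg.mem (e i)
  eq_zero_of_sum_eq_zero c hc hsum i := by
    have := hg.eq_zero_of_sum_eq_zero (c ∘ e.symm) (fun _ => hc _)
      (by rw [← e.sum_comp]; simpa using hsum) (e i)
    simpa using this
  exists_sum_eq x hx := by
    obtain ⟨c, hc, rfl⟩ := hg.exists_sum_eq x hx
    exact ⟨c ∘ e, fun _ => hc _, (e.sum_comp fun i => c i * g i).symm⟩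

theorem mul {v : ι → Ω} {w : κ → Ω} (hv : IsRelBasis L L' v) (hw : IsRelBasis L' M w) :
    IsRelBasis L M (fun k : ι × κ => v k.1 * w k.2) where
  le := hv.le.trans hw.le
  mem k := mul_mem (hw.le (hv.mem k.1)) (hw.mem k.2)
  eq_zero_of_sum_eq_zero c hc hsum := by
    have hsum' : ∑ j, (∑ i, c (i, j) * v i) * w j = 0 := by
      simpa [Fintype.sum_prod_type, sum_comm (γ := ι), sum_mul, mul_assoc]
        using hsum
    have hinner := hw.eq_zero_of_sum_eq_zero _
      (fun j => sum_mem fun i _ => mul_mem (hv.le (hc _)) (hv.mem i)) hsum'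
    exact fun k => hv.eq_zero_of_sum_eq_zero (fun i => c (i, k.2)) (fun _ => hc _) (hinner k.2) k.1
  exists_sum_eq x hx := by
    obtain ⟨d, hd, rfl⟩ := hw.exists_sum_eq x hx
    choose c hc hdc using fun j => hv.exists_sum_eq (d j) (hd j)
    refine ⟨fun k => c k.2 k.1, fun k => hc _ _, ?_⟩
    simp [Fintype.sum_prod_type, sum_comm (γ := ι), hdc, sum_mul, mul_assoc]

/-- Replacing `g k₀` by an `L`-combination of the `g k` in which `g k₀` has coefficient `1`
is a unitriangular change of basis. -/
theorem update_sum [DecidableEq ι] {g : ι → Ω} (hg : IsRelBasis L M g) (k₀ : ι) {a : ι → Ω}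
    (ha : ∀ k, a k ∈ L) (ha₀ : a k₀ = 1) :
    IsRelBasis L M (Function.update g k₀ (∑ k, a k * g k)) where
  le := hg.le
  mem k := by
    rcases eq_or_ne k k₀ with rfl | hk
    · simpa using sum_mem fun k _ => mul_mem (hg.le (ha k)) (hg.mem k)
    · simpa [hk] using hg.mem k
  eq_zero_of_sum_eq_zero c hc hsum := by
    rw [sum_mul_update, mul_sum, ← sum_add_distrib] at hsum
    simp_rw [← mul_assoc, ← add_mul] at hsum
    have hcoef := hg.eq_zero_of_sum_eq_zero _ (fun k => add_mem
      (by rcases eq_or_ne k k₀ with rfl | hk <;> simp [*, zero_mem]) (mul_mem (hc k₀) (ha k))) hsum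
    have hc₀ : c k₀ = 0 := by simpa [ha₀] using hcoef k₀
    intro k
    rcases eq_or_ne k k₀ with rfl | hk
    · exact hc₀
    · simpa [hc₀, hk] using hcoef k
  exists_sum_eq x hx := by
    obtain ⟨d, hd, rfl⟩ := hg.exists_sum_eq x hx
    refine ⟨Function.update (fun k => d k - d k₀ * a k) k₀ (d k₀), fun k => ?_, ?_⟩
    · rcases eq_or_ne k k₀ with rfl | hk
      · simpa using hd k
      · simpa [hk] using sub_mem (hd k) (mul_mem (hd k₀) (ha k))
    · rw [sum_mul_update, mul_sum, ← sum_add_distrib]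
      refine sum_congr rfl fun k _ => ?_
      rcases eq_or_ne k k₀ with rfl | hk
      · simp [ha₀]
      · simp only [ne_eq, hk, not_false_eq_true, Function.update_of_ne, Function.update_self]
        ring

theorem mul_update [DecidableEq ι] [DecidableEq κ] {v : ι → Ω} {w : κ → Ω}
    (hv : IsRelBasis L L' v) (hw : IsRelBasis L' M w) (i₀ : ι) (j₀ : κ) :
    IsRelBasis L M
      (Function.update (fun k : ι × κ => v k.1 * w k.2) (i₀, j₀) (v i₀ * ∑ j, w j)) := by
  have hsum : ∑ k : ι × κ, (if k.1 = i₀ then 1 else 0) * (v k.1 * w k.2) = v i₀ * ∑ j, w j := by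
    simp [Fintype.sum_prod_type, mul_sum]
  rw [← hsum]
  exact (hv.mul hw).update_sum (i₀, j₀) (fun k => by split_ifs <;> simp [one_mem, zero_mem])
    (by simp)

theorem prod_pi {K : ℕ → IntermediateField F Ω} {κ : ℕ → Type*} [∀ i, Fintype (κ i)]
    {g : (i : ℕ) → κ i → Ω} :
    ∀ {n : ℕ}, (∀ i < n, IsRelBasis (K i) (K (i + 1)) (g i)) →
      IsRelBasis (K 0) (K n) (fun f : (i : Fin n) → κ i => ∏ i : Fin n, g i (f i))
  | 0, _ => by simpa using of_unique (ι := (i : Fin 0) → κ i) (K 0)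
  | n + 1, hg => by
    have hstep := (prod_pi (n := n) fun i hi => hg i (by omega)).mul (hg n (by omega))
    convert hstep.comp_equiv ((Fin.snocEquiv fun i : Fin (n + 1) => κ i).symm.trans
      (Equiv.prodComm _ _)) using 1
    funext f
    simp [Fin.prod_univ_castSucc, Fin.init]

theorem pow_of_eq_sup_adjoin {a : Ω} {f : ι → ℕ} (hM : M = L ⊔ IntermediateField.adjoin F {a})
    (h : (∀ c : ι → Ω, (∀ i, c i ∈ L) → ∑ i, c i * a ^ f i = 0 → ∀ i, c i = 0) ∧
      (∀ x ∈ M, ∃ c : ι → Ω, (∀ i, c i ∈ L) ∧ x = ∑ i, c i * a ^ f i)) :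
    IsRelBasis L M (fun i => a ^ f i) where
  le := hM ▸ le_sup_left
  mem _ := pow_mem (hM ▸ le_sup_right (a := L) (IntermediateField.mem_adjoin_simple_self F a)) _
  eq_zero_of_sum_eq_zero := h.1
  exists_sum_eq := h.2

theorem pow_mul_pow_update_last {a b : Ω} {p s u : ℕ} (hp : 0 < p) (hs : 0 < s)
    (ha : IsRelBasis L L' (fun i : Fin p => a ^ (u * i)))
    (hb : IsRelBasis L' M (fun j : Fin s => b ^ (j : ℕ))) :
    IsRelBasis L M (fun k : Fin p × Fin s => a ^ (u * k.1) *
      if (k.1 : ℕ) = p - 1 ∧ (k.2 : ℕ) = s - 1 then ∑ j ∈ range s, b ^ j else b ^ (k.2 : ℕ)) := by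
  convert ha.mul_update hb ⟨p - 1, by omega⟩ ⟨s - 1, by omega⟩ using 1
  funext k
  rcases eq_or_ne k (⟨p - 1, by omega⟩, ⟨s - 1, by omega⟩) with rfl | hk
  · simp [Fin.sum_univ_eq_sum_range (fun j => b ^ j)]
  · rw [Function.update_of_ne hk, if_neg]
    contrapose! hk
    ext <;> simp [hk]

theorem linearIndependent {g : ι → Ω} (hg : IsRelBasis ⊥ M g) : LinearIndependent F g := by
  refine Fintype.linearIndependent_iff.mpr fun c hc i => ?_
  have := hg.eq_zero_of_sum_eq_zero (fun i => algebraMap F Ω (c i))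
    (fun i => IntermediateField.algebraMap_mem _ _) (by simpa [Algebra.smul_def] using hc) i
  simpa using this

theorem span_eq {g : ι → Ω} (hg : IsRelBasis ⊥ M g) :
    (Submodule.span F (Set.range g) : Set Ω) = M := by
  apply le_antisymm
  · exact (Submodule.span_le (p := Subalgebra.toSubmodule M.toSubalgebra)).mpr
      (Set.range_subset_iff.mpr hg.mem)
  · intro x hx
    obtain ⟨c, hc, rfl⟩ := hg.exists_sum_eq x hx
    refine sum_mem fun i _ => ?_
    obtain ⟨a, ha⟩ := IntermediateField.mem_bot.mp (hc i)
    rw [← ha, ← Algebra.smul_def]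
    exact Submodule.smul_mem _ a (Submodule.subset_span ⟨i, rfl⟩)

end IsRelBasis

end RelBasis

theorem lemma4_B_is_basis_general
    (F Ω : Type*) [Field F] [Field Ω] [Algebra F Ω]
    (nb sb u : ℕ) (hsb : 1 ≤ sb)
    (p : ℕ → ℕ)
    (hp : ∀ e ∈ Finset.Icc 1 nb, (p e).Prime)
    (α β : ℕ → Ω)
    (K Kf : ℕ → IntermediateField F Ω)
    (hK0 : K 0 = ⊥)
    (hKf : ∀ e ∈ Finset.Icc 1 nb,
      Kf e = K (e - 1) ⊔ IntermediateField.adjoin F {α e})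
    (hK : ∀ e ∈ Finset.Icc 1 nb,
      K e = Kf e ⊔ IntermediateField.adjoin F {β e})
    (hαbasis : ∀ e ∈ Finset.Icc 1 nb,
      (∀ c : Fin (p e) → Ω, (∀ i, c i ∈ K (e - 1)) →
        ∑ i, c i * (α e) ^ (u * i.1) = 0 → ∀ i, c i = 0) ∧
      (∀ x ∈ Kf e, ∃ c : Fin (p e) → Ω, (∀ i, c i ∈ K (e - 1)) ∧
        x = ∑ i, c i * (α e) ^ (u * i.1)))
    (hβbasis : ∀ e ∈ Finset.Icc 1 nb,
      (∀ c : Fin sb → Ω, (∀ i, c i ∈ Kf e) →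
        ∑ i, c i * (β e) ^ i.1 = 0 → ∀ i, c i = 0) ∧
      (∀ x ∈ K e, ∃ c : Fin sb → Ω, (∀ i, c i ∈ Kf e) ∧
        x = ∑ i, c i * (β e) ^ i.1))
    (b : (((x : Fin nb) → Fin (p (x.1 + 1))) × (Fin nb → Fin sb)) → Ω)
    (hb : ∀ iv, b iv =
      (∏ x : Fin nb, (α (x.1 + 1)) ^ (u * (iv.1 x).1)) *
        ∏ y : Fin nb,
          (if (iv.1 y).1 = p (y.1 + 1) - 1 ∧ (iv.2 y).1 = sb - 1 then
            ∑ j ∈ Finset.range sb, (β (y.1 + 1)) ^ j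
          else (β (y.1 + 1)) ^ (iv.2 y).1)) :
    LinearIndependent F b ∧
      (Submodule.span F (Set.range b) : Set Ω) = (K nb : Set Ω) := by
  have hlevel : ∀ i < nb, IsRelBasis (K i) (K (i + 1))
      (fun k : Fin (p (i + 1)) × Fin sb => α (i + 1) ^ (u * k.1) *
        if (k.1 : ℕ) = p (i + 1) - 1 ∧ (k.2 : ℕ) = sb - 1 then ∑ j ∈ range sb, β (i + 1) ^ j
        else β (i + 1) ^ (k.2 : ℕ)) := by
    intro i hi
    have he : i + 1 ∈ Icc 1 nb := mem_Icc.mpr ⟨by omega, hi⟩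
    have hα := IsRelBasis.pow_of_eq_sup_adjoin (hKf _ he) (hαbasis _ he)
    simp only [Nat.add_sub_cancel] at hα
    exact hα.pow_mul_pow_update_last (hp _ he).pos hsb
      (.pow_of_eq_sup_adjoin (hK _ he) (hβbasis _ he))
  have htower := (IsRelBasis.prod_pi hlevel).comp_equiv
    (Equiv.arrowProdEquivProdArrow (Fin nb) _ fun _ => Fin sb).symm
  rw [hK0] at htower
  have hb' : b = _ := funext fun iv => (hb iv).trans prod_mul_distrib.symm
  rw [hb']
  exact ⟨htower.linearIndependent, htower.span_eq⟩

/-- **Lemma 4, first claim: the set `B` is a basis.**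
With the field tower `K₀ = F`, `F_e = K_{e−1}(α_e)`, `K_e = F_e(β_e)` inside `Ω`
(here `Kf e` plays the role of `F_e`), where `{1, α_e^u, …, α_e^{u(p_e−1)}}` is a
`K_{e−1}`-basis of `F_e` and `{1, β_e, …, β_e^{s̄−1}}` is an `F_e`-basis of `K_e`,
indices `i` are identified with tuples `((i_e)_e, (i'_e)_e)`, `0 ≤ i_e < p_e`,
`0 ≤ i'_e < s̄` (rack `e ∈ {1,…,n̄}` corresponds to `x : Fin n̄` via `e = x+1`).
With `𝓔_i = {e : (i_e, i'_e) = (p_e−1, s̄−1)}` and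
`b_i = ∏_x α_x^{u·i_x} · ∏_{y∈𝓔_i} (∑_{j<s̄} β_y^j) · ∏_{y∉𝓔_i} β_y^{i'_y}`,
the family `B = (b_i)` is an `F`-basis of `K = K_n̄`. -/
theorem lemma4_B_is_basis
    (F Ω : Type*) [Field F] [Fintype F] [Field Ω] [IsAlgClosed Ω] [Algebra F Ω]
    (q nb sb u : ℕ) (hq : Fintype.card F = q) (hsb : 1 ≤ sb) (hu : 0 < u)
    (p : ℕ → ℕ)
    (hp : ∀ e ∈ Finset.Icc 1 nb, (p e).Prime)
    (hpdistinct : ∀ e ∈ Finset.Icc 1 nb, ∀ e' ∈ Finset.Icc 1 nb, e ≠ e' → p e ≠ p e')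
    (hpmod : ∀ e ∈ Finset.Icc 1 nb, sb ∣ (p e - 1))
    (α β : ℕ → Ω)
    (K Kf : ℕ → IntermediateField F Ω)
    (hK0 : K 0 = ⊥)
    (hKf : ∀ e ∈ Finset.Icc 1 nb,
      Kf e = K (e - 1) ⊔ IntermediateField.adjoin F {α e})
    (hK : ∀ e ∈ Finset.Icc 1 nb,
      K e = Kf e ⊔ IntermediateField.adjoin F {β e})
    (hαbasis : ∀ e ∈ Finset.Icc 1 nb,
      (∀ c : Fin (p e) → Ω, (∀ i, c i ∈ K (e - 1)) →
        ∑ i, c i * (α e) ^ (u * i.1) = 0 → ∀ i, c i = 0) ∧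
      (∀ x ∈ Kf e, ∃ c : Fin (p e) → Ω, (∀ i, c i ∈ K (e - 1)) ∧
        x = ∑ i, c i * (α e) ^ (u * i.1)))
    (hβbasis : ∀ e ∈ Finset.Icc 1 nb,
      (∀ c : Fin sb → Ω, (∀ i, c i ∈ Kf e) →
        ∑ i, c i * (β e) ^ i.1 = 0 → ∀ i, c i = 0) ∧
      (∀ x ∈ K e, ∃ c : Fin sb → Ω, (∀ i, c i ∈ Kf e) ∧
        x = ∑ i, c i * (β e) ^ i.1))
    (b : (((x : Fin nb) → Fin (p (x.1 + 1))) × (Fin nb → Fin sb)) → Ω)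
    (hb : ∀ iv, b iv =
      (∏ x : Fin nb, (α (x.1 + 1)) ^ (u * (iv.1 x).1)) *
        ∏ y : Fin nb,
          (if (iv.1 y).1 = p (y.1 + 1) - 1 ∧ (iv.2 y).1 = sb - 1 then
            ∑ j ∈ Finset.range sb, (β (y.1 + 1)) ^ j
          else (β (y.1 + 1)) ^ (iv.2 y).1)) :
    LinearIndependent F b ∧
      (Submodule.span F (Set.range b) : Set Ω) = (K nb : Set Ω) :=
  lemma4_B_is_basis_general F Ω nb sb u hsb p hp α β K Kf hK0 hKf hK hαbasis hβbasis b hb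
end

section
/- Lemma 4, second claim (equality of spans). In the setting of the first claim of Lemma 4, define a_i = (∏_{x=1}^{n̄} α_x^{u i_x}) · (∏_{y=1}^{n̄} β_y^{i'_y}) for each i ∈ {0,…,l−1}, and for each e ∈ {1,…,n̄} let A_e = {a_i : (i_e, i'_e) = (0,0)} and B_e = {b_i : (i_e, i'_e) = (0,0)}, where b_i is as in the first claim. Then Span_F A_e = Span_F B_e for every e = 1,…,n̄. -/
open Finset in
private lemma aux_sum_trick {Ω : Type*} [CommRing Ω] {s : ℕ} (v : ℕ → Ω) (hs : 1 ≤ s) :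
    ∑ j' : Fin s, (if j'.1 = s - 1 then (∑ k ∈ Finset.range s, v k) else -(v j'.1))
      = v (s - 1) := by
  have hlt : s - 1 < s := by omega
  have h1 : ∀ j' : Fin s,
      (if j'.1 = s - 1 then (∑ k ∈ Finset.range s, v k) else -(v j'.1))
        = (if j' = (⟨s-1, hlt⟩ : Fin s) then (∑ k ∈ Finset.range s, v k) + v j'.1 else 0)
            - v j'.1 := by
    intro j'
    by_cases h : j'.1 = s - 1
    · rw [if_pos h, if_pos (Fin.ext h)]; ring
    · rw [if_neg h, if_neg (fun hh => h (by rw [hh]))]; ring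
  simp_rw [h1, Finset.sum_sub_distrib, Finset.sum_ite_eq', Finset.mem_univ, if_pos,
    Fin.sum_univ_eq_sum_range]
  ring

open Finset in
private lemma aux_mem {F Ω : Type*} [Field F] [Field Ω] [Algebra F Ω] {n s : ℕ}
    (fa fb : Fin n → Fin s → Ω) (c : Fin n → Fin s → Fin s → F)
    (hc : ∀ y j, fb y j = ∑ j' : Fin s, algebraMap F Ω (c y j j') * fa y j')
    (P : Ω) (iv2 : Fin n → Fin s) (e : Fin n)
    (h0 : ∀ j' : Fin s, j' ≠ iv2 e → c e (iv2 e) j' = 0)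
    (S : Set Ω) (hS : ∀ g : Fin n → Fin s, g e = iv2 e → P * ∏ y, fa y (g y) ∈ S) :
    P * ∏ y, fb y (iv2 y) ∈ Submodule.span F S := by
  have key : P * ∏ y, fb y (iv2 y)
      = ∑ g ∈ Fintype.piFinset (fun _ : Fin n => (Finset.univ : Finset (Fin s))),
          (∏ y, c y (iv2 y) (g y)) • (P * ∏ y, fa y (g y)) := by
    simp_rw [hc, Finset.prod_univ_sum, Finset.mul_sum]
    refine Finset.sum_congr rfl fun g _ => ?_
    rw [Finset.prod_mul_distrib, ← map_prod, Algebra.smul_def]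
    ring
  rw [key]
  refine Submodule.sum_mem _ fun g _ => ?_
  by_cases hge : g e = iv2 e
  · exact Submodule.smul_mem _ _ (Submodule.subset_span (hS g hge))
  · have : c e (iv2 e) (g e) = 0 := h0 _ hge
    rw [show (∏ y, c y (iv2 y) (g y)) = 0 from
      Finset.prod_eq_zero (Finset.mem_univ e) this, zero_smul]
    exact Submodule.zero_mem _


/-- **Lemma 4, second claim: equality of spans.**
In the setting of the first claim of Lemma 4, with
`a_i = ∏_x α_x^{u·i_x} · ∏_y β_y^{i'_y}` and, for each `e`,
`A_e = {a_i : (i_e, i'_e) = (0,0)}`, `B_e = {b_i : (i_e, i'_e) = (0,0)}`, one has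
`Span_F A_e = Span_F B_e` for every `e = 1,…,n̄` (rack `e` corresponds to
`x : Fin n̄` via `e = x+1`). -/
theorem lemma4_span_equality
    (F Ω : Type*) [Field F] [Fintype F] [Field Ω] [IsAlgClosed Ω] [Algebra F Ω]
    (q nb sb u : ℕ) (hq : Fintype.card F = q) (hsb : 1 ≤ sb) (hu : 0 < u)
    (p : ℕ → ℕ)
    (hp : ∀ e ∈ Finset.Icc 1 nb, (p e).Prime)
    (hpdistinct : ∀ e ∈ Finset.Icc 1 nb, ∀ e' ∈ Finset.Icc 1 nb, e ≠ e' → p e ≠ p e')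
    (hpmod : ∀ e ∈ Finset.Icc 1 nb, sb ∣ (p e - 1))
    (α β : ℕ → Ω)
    (K Kf : ℕ → IntermediateField F Ω)
    (hK0 : K 0 = ⊥)
    (hKf : ∀ e ∈ Finset.Icc 1 nb,
      Kf e = K (e - 1) ⊔ IntermediateField.adjoin F {α e})
    (hK : ∀ e ∈ Finset.Icc 1 nb,
      K e = Kf e ⊔ IntermediateField.adjoin F {β e})
    (hαbasis : ∀ e ∈ Finset.Icc 1 nb,
      (∀ c : Fin (p e) → Ω, (∀ i, c i ∈ K (e - 1)) →
        ∑ i, c i * (α e) ^ (u * i.1) = 0 → ∀ i, c i = 0) ∧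
      (∀ x ∈ Kf e, ∃ c : Fin (p e) → Ω, (∀ i, c i ∈ K (e - 1)) ∧
        x = ∑ i, c i * (α e) ^ (u * i.1)))
    (hβbasis : ∀ e ∈ Finset.Icc 1 nb,
      (∀ c : Fin sb → Ω, (∀ i, c i ∈ Kf e) →
        ∑ i, c i * (β e) ^ i.1 = 0 → ∀ i, c i = 0) ∧
      (∀ x ∈ K e, ∃ c : Fin sb → Ω, (∀ i, c i ∈ Kf e) ∧
        x = ∑ i, c i * (β e) ^ i.1))
    (b : (((x : Fin nb) → Fin (p (x.1 + 1))) × (Fin nb → Fin sb)) → Ω)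
    (hb : ∀ iv, b iv =
      (∏ x : Fin nb, (α (x.1 + 1)) ^ (u * (iv.1 x).1)) *
        ∏ y : Fin nb,
          (if (iv.1 y).1 = p (y.1 + 1) - 1 ∧ (iv.2 y).1 = sb - 1 then
            ∑ j ∈ Finset.range sb, (β (y.1 + 1)) ^ j
          else (β (y.1 + 1)) ^ (iv.2 y).1))
    (a : (((x : Fin nb) → Fin (p (x.1 + 1))) × (Fin nb → Fin sb)) → Ω)
    (ha : ∀ iv, a iv =
      (∏ x : Fin nb, (α (x.1 + 1)) ^ (u * (iv.1 x).1)) *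
        ∏ y : Fin nb, (β (y.1 + 1)) ^ (iv.2 y).1) :
    ∀ e : Fin nb,
      Submodule.span F
          (a '' {iv : ((x : Fin nb) → Fin (p (x.1 + 1))) × (Fin nb → Fin sb) |
            (iv.1 e).1 = 0 ∧ (iv.2 e).1 = 0})
        = Submodule.span F
          (b '' {iv : ((x : Fin nb) → Fin (p (x.1 + 1))) × (Fin nb → Fin sb) |
            (iv.1 e).1 = 0 ∧ (iv.2 e).1 = 0}) := by
  intro e
  have hemem : e.1 + 1 ∈ Finset.Icc 1 nb := by
    have := e.2; simp only [Finset.mem_Icc]; omega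
  have hpe2 : 2 ≤ p (e.1 + 1) := (hp _ hemem).two_le
  apply le_antisymm
  · -- span A ≤ span B
    rw [Submodule.span_le]
    rintro x ⟨iv, ⟨hiv1, hiv2⟩, rfl⟩
    rw [ha]
    refine aux_mem
      (fa := fun y j => if (iv.1 y).1 = p (y.1 + 1) - 1 ∧ j.1 = sb - 1 then
          ∑ k ∈ Finset.range sb, β (y.1 + 1) ^ k else β (y.1 + 1) ^ j.1)
      (fb := fun y j => β (y.1 + 1) ^ j.1)
      (c := fun y j j' => if (iv.1 y).1 = p (y.1 + 1) - 1 ∧ j.1 = sb - 1 then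
          (if j'.1 = sb - 1 then 1 else -1) else (if j' = j then 1 else 0))
      ?_ _ iv.2 e ?_ _ ?_
    · intro y j
      by_cases hcond : (iv.1 y).1 = p (y.1 + 1) - 1 ∧ j.1 = sb - 1
      · simp only [if_pos hcond, hcond.1, true_and]
        rw [hcond.2, ← aux_sum_trick (fun k => β (y.1+1) ^ k) hsb]
        refine Finset.sum_congr rfl fun j' _ => ?_
        by_cases h' : j'.1 = sb - 1
        · simp [h']
        · simp [h']
      · simp only [if_neg hcond]
        rw [Finset.sum_eq_single j]
        · simp [hcond]
        · intro j' _ hj'; simp [hj']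
        · simp
    · intro j' hj'
      have hcond : ¬((iv.1 e).1 = p (e.1 + 1) - 1 ∧ (iv.2 e).1 = sb - 1) := by
        intro h; omega
      simp [hcond, hj']
    · intro g hge
      refine ⟨(iv.1, g), ⟨hiv1, by show (g e).1 = 0; rw [hge]; exact hiv2⟩, ?_⟩
      rw [hb]
  · -- span B ≤ span A
    rw [Submodule.span_le]
    rintro x ⟨iv, ⟨hiv1, hiv2⟩, rfl⟩
    rw [hb]
    refine aux_mem
      (fa := fun y j => β (y.1 + 1) ^ j.1)
      (fb := fun y j => if (iv.1 y).1 = p (y.1 + 1) - 1 ∧ j.1 = sb - 1 then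
          ∑ k ∈ Finset.range sb, β (y.1 + 1) ^ k else β (y.1 + 1) ^ j.1)
      (c := fun y j j' => if (iv.1 y).1 = p (y.1 + 1) - 1 ∧ j.1 = sb - 1 then 1
          else (if j' = j then 1 else 0))
      ?_ _ iv.2 e ?_ _ ?_
    · intro y j
      by_cases hcond : (iv.1 y).1 = p (y.1 + 1) - 1 ∧ j.1 = sb - 1
      · simp only [if_pos hcond, map_one, one_mul]
        exact (Fin.sum_univ_eq_sum_range (fun k => β (y.1+1) ^ k) sb).symm
      · simp only [if_neg hcond]
        rw [Finset.sum_eq_single j]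
        · simp
        · intro j' _ hj'; simp [hj']
        · simp
    · intro j' hj'
      have hcond : ¬((iv.1 e).1 = p (e.1 + 1) - 1 ∧ (iv.2 e).1 = sb - 1) := by
        intro h; omega
      simp [hcond, hj']
    · intro g hge
      refine ⟨(iv.1, g), ⟨hiv1, by show (g e).1 = 0; rw [hge]; exact hiv2⟩, ?_⟩
      rw [ha]
end

section
/- Product basis used in the proof of Theorem 4. With the field tower of the context, for each e = 1,…,n̄ define the finite set E_e = {β_e^j α_e^{u(j+t s̄)} : 0 ≤ j ≤ s̄−1, 0 ≤ t ≤ (p_e−1)/s̄ − 1} ∪ {α_e^{u(p_e−1)} · ∑_{j=0}^{s̄−1} β_e^j} ⊆ K. Then the set { (∏_{e=1}^{n̄} ξ_e) · (∏_{e=1}^{n̄} α_e^{u w_e}) : ξ_e ∈ E_e and 0 ≤ w_e ≤ s̄ − 1 for each e } is an F-basis of K = K_{n̄} (in particular its s̄^{n̄} ∏_e p_e listed elements are pairwise distinct and F-linearly independent). -/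
/-!
Write `IsBasisOver A B v` when `v` is an `A`-basis of the intermediate field `B`. Bases multiply
along towers, so it suffices that each step family `E_e · α_e^{u w}` is a `K_{e-1}`-basis of
`K_e`. It has `p_e s̄ = [K_e : K_{e-1}]` members, so it is enough that it spans, and this follows
from `β^w F_e ⊆ span` for `w < s̄`, by strong induction on `w`. Since `α^{u(w+k)}`, `k < p`, is
again a `K_{e-1}`-basis of `F_e`, one needs `β^w α^{u(w+k)} ∈ span`: for `k < p - 1` it is listed,
and for `k = p - 1` it is the exceptional element `α^{u(p-1+w)} ∑_j β^j` minus the terms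
`β^j α^{u(p-1+w)}`, which are listed for `j > w` and covered by the induction for `j < w`.
-/

open Finset Submodule

theorem mul_mem_of_mem_span {R S : Type*} [CommSemiring R] [Semiring S] [Algebra R S]
    {ι : Type*} {V : Submodule R S} {y : ι → S} {z x : S} (hx : x ∈ span R (Set.range y))
    (h : ∀ i, z * y i ∈ V) : z * x ∈ V :=
  (span_le (p := V.comap (LinearMap.mulLeft R z))).2 (Set.range_subset_iff.2 h) hx

section Basis

variable {F Ω : Type*} [Field F] [Field Ω] [Algebra F Ω] {ι κ : Type*}
  {A B C : IntermediateField F Ω} {v : ι → Ω} {w : κ → Ω}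

def IsBasisOver (A B : IntermediateField F Ω) (v : ι → Ω) : Prop :=
  LinearIndependent A v ∧ (span A (Set.range v) : Set Ω) = B

theorem mem_span_range_iff_exists_sum_mul [Fintype ι] {x : Ω} :
    x ∈ span A (Set.range v) ↔ ∃ c : ι → Ω, (∀ i, c i ∈ A) ∧ x = ∑ i, c i * v i := by
  rw [mem_span_range_iff_exists_fun]
  constructor
  · rintro ⟨c, rfl⟩
    exact ⟨fun i => c i, fun i => (c i).2, by simp [IntermediateField.smul_def]⟩
  · rintro ⟨c, hc, rfl⟩
    exact ⟨fun i => ⟨c i, hc i⟩, by simp [IntermediateField.smul_def]⟩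

theorem linearIndependent_iff_forall_sum_mul_eq_zero [Fintype ι] :
    LinearIndependent A v ↔
      ∀ c : ι → Ω, (∀ i, c i ∈ A) → ∑ i, c i * v i = 0 → ∀ i, c i = 0 := by
  rw [Fintype.linearIndependent_iff]
  constructor
  · intro h c hc hsum i
    exact congrArg Subtype.val
      (h (fun i => ⟨c i, hc i⟩) (by simpa [IntermediateField.smul_def] using hsum) i)
  · intro h g hg i
    exact Subtype.ext (h (fun i => g i) (fun i => (g i).2)
      (by simpa [IntermediateField.smul_def] using hg) i)

theorem isBasisOver_of_forall_sum_mul [Fintype ι] (hAB : A ≤ B) (hv : ∀ i, v i ∈ B)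
    (hli : ∀ c : ι → Ω, (∀ i, c i ∈ A) → ∑ i, c i * v i = 0 → ∀ i, c i = 0)
    (hspan : ∀ x ∈ B, ∃ c : ι → Ω, (∀ i, c i ∈ A) ∧ x = ∑ i, c i * v i) :
    IsBasisOver A B v := by
  refine ⟨linearIndependent_iff_forall_sum_mul_eq_zero.2 hli, Set.Subset.antisymm ?_
    fun x hx => mem_span_range_iff_exists_sum_mul.2 (hspan x hx)⟩
  intro x hx
  obtain ⟨c, hc, rfl⟩ := mem_span_range_iff_exists_sum_mul.1 hx
  exact sum_mem fun i _ => mul_mem (hAB (hc i)) (hv i)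

theorem isBasisOver_const_one [Unique ι] (A : IntermediateField F Ω) :
    IsBasisOver A A fun _ : ι => (1 : Ω) := by
  refine ⟨linearIndependent_unique_iff.2 one_ne_zero, ?_⟩
  ext x
  simp [Set.range_const, mem_span_singleton, IntermediateField.smul_def]

theorem IsBasisOver.comp_equiv (h : IsBasisOver A B v) (E : κ ≃ ι) : IsBasisOver A B (v ∘ E) :=
  ⟨h.1.comp E E.injective, by rw [EquivLike.range_comp]; exact h.2⟩

theorem sum_prod_mul_mul_eq_sum_mul [Fintype ι] [Fintype κ] (c : ι × κ → Ω) (v : ι → Ω)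
    (w : κ → Ω) :
    ∑ q, c q * (v q.1 * w q.2) = ∑ k, (∑ i, c (i, k) * v i) * w k := by
  simp_rw [Fintype.sum_prod_type_right, Finset.sum_mul, mul_assoc]

theorem IsBasisOver.mul [Fintype ι] [Fintype κ] (hv : IsBasisOver A B v) (hw : IsBasisOver B C w) :
    IsBasisOver A C fun q : ι × κ => v q.1 * w q.2 := by
  have hB (d : ι → Ω) (hd : ∀ i, d i ∈ A) : ∑ i, d i * v i ∈ B := by
    rw [← SetLike.mem_coe, ← hv.2]
    exact mem_span_range_iff_exists_sum_mul.2 ⟨d, hd, rfl⟩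
  refine ⟨linearIndependent_iff_forall_sum_mul_eq_zero.2 fun c hc hsum q => ?_, ?_⟩
  · rw [sum_prod_mul_mul_eq_sum_mul] at hsum
    have hinner := linearIndependent_iff_forall_sum_mul_eq_zero.1 hw.1 _
      (fun k => hB _ fun i => hc (i, k)) hsum
    exact linearIndependent_iff_forall_sum_mul_eq_zero.1 hv.1 _ (fun i => hc _) (hinner q.2) q.1
  · ext x
    rw [← hw.2, SetLike.mem_coe, SetLike.mem_coe, mem_span_range_iff_exists_sum_mul,
      mem_span_range_iff_exists_sum_mul]
    constructor
    · rintro ⟨c, hc, rfl⟩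
      exact ⟨_, fun k => hB _ fun i => hc (i, k), sum_prod_mul_mul_eq_sum_mul c v w⟩
    · rintro ⟨d, hd, rfl⟩
      have hdv (k : κ) : ∃ c : ι → Ω, (∀ i, c i ∈ A) ∧ d k = ∑ i, c i * v i := by
        rw [← mem_span_range_iff_exists_sum_mul, ← SetLike.mem_coe, hv.2]
        exact hd k
      choose c hc hdc using hdv
      refine ⟨fun q => c q.2 q.1, fun q => hc _ _, ?_⟩
      rw [sum_prod_mul_mul_eq_sum_mul]
      simp_rw [hdc]

theorem IsBasisOver.of_subset_span [Fintype ι] [Fintype κ] (hv : IsBasisOver A B v)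
    (hw : (B : Set Ω) ⊆ span A (Set.range w)) (hcard : Fintype.card κ ≤ Fintype.card ι) :
    IsBasisOver A B w := by
  have : FiniteDimensional A (span A (Set.range w)) :=
    Module.Finite.span_of_finite A (Set.finite_range w)
  have hle : span A (Set.range v) ≤ span A (Set.range w) := fun x hx => hw (hv.2 ▸ hx)
  have hv_rank := finrank_span_eq_card hv.1
  have hw_rank := finrank_range_le_card (R := A) w
  have heq := eq_of_le_of_finrank_le hle (by rw [hv_rank]; exact hw_rank.trans hcard)
  refine ⟨linearIndependent_iff_card_eq_finrank_span.2 ?_, heq ▸ hv.2⟩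
  rw [Set.finrank, ← heq, hv_rank] at hw_rank ⊢
  omega

theorem IsBasisOver.subset_span_const_mul [Fintype ι] (hv : IsBasisOver A B v) {c : Ω} (hc : c ∈ B)
    (hc0 : c ≠ 0) : (B : Set Ω) ⊆ span A (Set.range fun i => c * v i) := by
  intro x hx
  have hx' : c⁻¹ * x ∈ (span A (Set.range v) : Set Ω) := hv.2 ▸ mul_mem (inv_mem hc) hx
  obtain ⟨d, hd, hxd⟩ := mem_span_range_iff_exists_sum_mul.1 hx'
  refine mem_span_range_iff_exists_sum_mul.2 ⟨d, hd, ?_⟩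
  calc x = c * (c⁻¹ * x) := by field_simp
    _ = ∑ i, d i * (c * v i) := by
      rw [hxd, mul_sum]
      exact sum_congr rfl fun i _ => by ring

theorem IsBasisOver.linearIndependent_and_span_of_bot (h : IsBasisOver ⊥ B v) :
    LinearIndependent F v ∧ (span F (Set.range v) : Set Ω) = B := by
  have hsurj : Function.Surjective (algebraMap F (⊥ : IntermediateField F Ω)) := by
    rintro ⟨x, hx⟩
    obtain ⟨y, rfl⟩ := IntermediateField.mem_bot.1 hx
    exact ⟨y, rfl⟩
  refine ⟨h.1.restrict_scalars' F, ?_⟩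
  rw [← restrictScalars_span F _ hsurj, coe_restrictScalars, h.2]

theorem isBasisOver_prod_of_chain (K : ℕ → IntermediateField F Ω) {I : ℕ → Type*}
    [∀ e, Fintype (I e)] (g : (e : ℕ) → I e → Ω) :
    ∀ n, (∀ e < n, IsBasisOver (K e) (K (e + 1)) (g e)) →
      IsBasisOver (K 0) (K n) fun f : (e : Fin n) → I e => ∏ e : Fin n, g e (f e)
  | 0, _ => by simpa using isBasisOver_const_one (ι := (e : Fin 0) → I e) (K 0)
  | n + 1, hg => by
    have := ((isBasisOver_prod_of_chain K g n fun e he => hg e (by omega)).mul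
      (hg n (by omega))).comp_equiv
      ((Fin.snocEquiv fun e : Fin (n + 1) => I e).symm.trans (Equiv.prodComm _ _))
    convert this using 2 with f
    simp [Fin.prod_univ_castSucc, Fin.init]

end Basis

section Step

variable {F Ω : Type*} [Field F] [Field Ω] [Algebra F Ω] {A Fe Ke : IntermediateField F Ω}
  {P s u : ℕ} {a b : Ω}

def stepFamily (P s u : ℕ) (a b : Ω) (ξw : Option (Fin s × Fin ((P - 1) / s)) × Fin s) : Ω :=
  ξw.1.elim (a ^ (u * (P - 1)) * ∑ j ∈ range s, b ^ j)
    (fun jt => b ^ (jt.1 : ℕ) * a ^ (u * (jt.1 + jt.2 * s))) * a ^ (u * ξw.2)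

theorem card_stepFamily_index (hP : 1 ≤ P) (hsP : s ∣ P - 1) :
    Fintype.card (Option (Fin s × Fin ((P - 1) / s)) × Fin s) = Fintype.card (Fin P × Fin s) := by
  simp only [Fintype.card_prod, Fintype.card_option, Fintype.card_fin, Nat.mul_div_cancel' hsP,
    Nat.sub_add_cancel hP]

theorem pow_mul_pow_mem_span_stepFamily (hsP : s ∣ P - 1) {j k : ℕ} (hj : j < s)
    (hk : k < P - 1) : b ^ j * a ^ (u * (j + k)) ∈ span A (Set.range (stepFamily P s u a b)) := by
  have hs : 0 < s := by omega
  convert mem_span_of_mem (R := A) (Set.mem_range_self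
    (f := stepFamily P s u a b) (some (⟨j, hj⟩, ⟨k / s, Nat.div_lt_div_of_lt_of_dvd hsP hk⟩),
      ⟨k % s, Nat.mod_lt k hs⟩)) using 1
  simp only [stepFamily, Option.elim_some, mul_assoc, ← pow_add, ← mul_add, add_assoc,
    Nat.div_add_mod' k s]

theorem sum_pow_mul_pow_mem_span_stepFamily {w : ℕ} (hw : w < s) :
    ∑ j ∈ range s, b ^ j * a ^ (u * (P - 1 + w)) ∈
      span A (Set.range (stepFamily P s u a b)) := by
  convert mem_span_of_mem (R := A) (Set.mem_range_self
    (f := stepFamily P s u a b) (none, ⟨w, hw⟩)) using 1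
  simp only [stepFamily, Option.elim_none, ← sum_mul, mul_add, pow_add]
  ring

theorem pow_mul_mem_span_stepFamily (hP : 1 < P) (hsP : s ∣ P - 1)
    (ha : IsBasisOver A Fe fun i : Fin P => a ^ (u * i)) :
    ∀ w < s, ∀ x ∈ Fe, b ^ w * x ∈ span A (Set.range (stepFamily P s u a b)) := by
  set V := span A (Set.range (stepFamily P s u a b))
  have hau : a ^ u ∈ Fe := by
    rw [← SetLike.mem_coe, ← ha.2]
    exact subset_span ⟨⟨1, hP⟩, by simp⟩
  have hau0 : a ^ u ≠ 0 := by simpa using ha.1.ne_zero ⟨1, hP⟩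
  have hpow (m : ℕ) : a ^ (u * m) ∈ Fe := by rw [pow_mul]; exact pow_mem hau m
  intro w
  induction w using Nat.strong_induction_on with
  | _ w ih =>
  intro hw x hx
  have hshift (k : Fin P) : b ^ w * (a ^ (u * w) * a ^ (u * k)) ∈ V := by
    rw [← pow_add, ← mul_add]
    rcases Nat.lt_or_ge k (P - 1) with hk | hk
    · exact pow_mul_pow_mem_span_stepFamily hsP hw hk
    · obtain hk : (k : ℕ) = P - 1 := by omega
      have hsum := sum_pow_mul_pow_mem_span_stepFamily (A := A) (a := a) (b := b) (u := u)
        (P := P) hw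
      rw [← add_sum_erase _ _ (mem_range.2 hw)] at hsum
      rw [hk, add_comm w]
      refine (V.add_mem_iff_left (sum_mem fun j hj => ?_)).1 hsum
      obtain ⟨hjw, hj⟩ := mem_erase.1 hj
      rw [mem_range] at hj
      rcases lt_or_gt_of_ne hjw with hlt | hgt
      · exact ih j hlt (by omega) _ (hpow _)
      · have hsP' : s ≤ P - 1 := Nat.le_of_dvd (by omega) hsP
        have := pow_mul_pow_mem_span_stepFamily (A := A) (a := a) (b := b) (u := u) hsP hj
          (k := P - 1 + w - j) (by omega)
        rwa [show j + (P - 1 + w - j) = P - 1 + w by omega] at this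
  exact mul_mem_of_mem_span
    (ha.subset_span_const_mul (hpow w) (by rw [pow_mul]; exact pow_ne_zero w hau0) hx) hshift

theorem isBasisOver_stepFamily (hP : 1 < P) (hsP : s ∣ P - 1)
    (ha : IsBasisOver A Fe fun i : Fin P => a ^ (u * i))
    (hb : IsBasisOver Fe Ke fun j : Fin s => b ^ (j : ℕ)) :
    IsBasisOver A Ke (stepFamily P s u a b) := by
  refine (ha.mul hb).of_subset_span (fun x hx => ?_) (card_stepFamily_index hP.le hsP).le
  rw [← hb.2, SetLike.mem_coe, mem_span_range_iff_exists_sum_mul] at hx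
  obtain ⟨c, hc, rfl⟩ := hx
  exact sum_mem fun j _ => mul_comm (c j) _ ▸ pow_mul_mem_span_stepFamily hP hsP ha j j.2 _ (hc j)

end Step

theorem product_basis_theorem4_general
    (F Ω : Type*) [Field F] [Field Ω] [Algebra F Ω]
    (nb sb u : ℕ)
    (p : ℕ → ℕ)
    (hp : ∀ e ∈ Finset.Icc 1 nb, (p e).Prime)
    (hpmod : ∀ e ∈ Finset.Icc 1 nb, sb ∣ (p e - 1))
    (α β : ℕ → Ω)
    (K Kf : ℕ → IntermediateField F Ω)
    (hK0 : K 0 = ⊥)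
    (hKf : ∀ e ∈ Finset.Icc 1 nb,
      Kf e = K (e - 1) ⊔ IntermediateField.adjoin F {α e})
    (hK : ∀ e ∈ Finset.Icc 1 nb,
      K e = Kf e ⊔ IntermediateField.adjoin F {β e})
    (hαbasis : ∀ e ∈ Finset.Icc 1 nb,
      (∀ c : Fin (p e) → Ω, (∀ i, c i ∈ K (e - 1)) →
        ∑ i, c i * (α e) ^ (u * i.1) = 0 → ∀ i, c i = 0) ∧
      (∀ x ∈ Kf e, ∃ c : Fin (p e) → Ω, (∀ i, c i ∈ K (e - 1)) ∧
        x = ∑ i, c i * (α e) ^ (u * i.1)))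
    (hβbasis : ∀ e ∈ Finset.Icc 1 nb,
      (∀ c : Fin sb → Ω, (∀ i, c i ∈ Kf e) →
        ∑ i, c i * (β e) ^ i.1 = 0 → ∀ i, c i = 0) ∧
      (∀ x ∈ K e, ∃ c : Fin sb → Ω, (∀ i, c i ∈ Kf e) ∧
        x = ∑ i, c i * (β e) ^ i.1))
    (fam : (((e : Fin nb) → Option (Fin sb × Fin ((p (e.1 + 1) - 1) / sb)))
      × (Fin nb → Fin sb)) → Ω)
    (hfam : ∀ ξw, fam ξw =
      (∏ e : Fin nb,
        (ξw.1 e).elim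
          ((α (e.1 + 1)) ^ (u * (p (e.1 + 1) - 1)) *
            ∑ j ∈ Finset.range sb, (β (e.1 + 1)) ^ j)
          (fun jt => (β (e.1 + 1)) ^ (jt.1.1) *
            (α (e.1 + 1)) ^ (u * (jt.1.1 + jt.2.1 * sb)))) *
      ∏ e : Fin nb, (α (e.1 + 1)) ^ (u * (ξw.2 e).1)) :
    LinearIndependent F fam ∧
      (Submodule.span F (Set.range fam) : Set Ω) = (K nb : Set Ω) := by
  have hIcc {e : ℕ} (he : e < nb) : e + 1 ∈ Finset.Icc 1 nb :=
    Finset.mem_Icc.2 ⟨by omega, by omega⟩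
  have hstep (e : ℕ) (he : e < nb) : IsBasisOver (K e) (K (e + 1))
      (stepFamily (p (e + 1)) sb u (α (e + 1)) (β (e + 1))) := by
    have hKf' := hKf _ (hIcc he)
    have hK' := hK _ (hIcc he)
    have hα := hαbasis _ (hIcc he)
    have hβ := hβbasis _ (hIcc he)
    simp only [Nat.add_sub_cancel] at hKf' hα
    have hαmem : α (e + 1) ∈ Kf (e + 1) :=
      hKf' ▸ le_sup_right (a := K e) (IntermediateField.mem_adjoin_simple_self F _)
    have hβmem : β (e + 1) ∈ K (e + 1) :=
      hK' ▸ le_sup_right (a := Kf (e + 1)) (IntermediateField.mem_adjoin_simple_self F _)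
    exact isBasisOver_stepFamily (hp _ (hIcc he)).one_lt (hpmod _ (hIcc he))
      (isBasisOver_of_forall_sum_mul (hKf' ▸ le_sup_left) (fun i => pow_mem hαmem _) hα.1 hα.2)
      (isBasisOver_of_forall_sum_mul (hK' ▸ le_sup_left) (fun j => pow_mem hβmem _) hβ.1 hβ.2)
  have hchain := isBasisOver_prod_of_chain K
    (fun e => stepFamily (p (e + 1)) sb u (α (e + 1)) (β (e + 1))) nb hstep
  rw [hK0] at hchain
  have hfam' : fam = (fun f => ∏ e : Fin nb,
      stepFamily (p (e + 1)) sb u (α (e + 1)) (β (e + 1)) (f e)) ∘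
        (Equiv.arrowProdEquivProdArrow _ _ _).symm := by
    funext ξw
    rw [hfam, ← prod_mul_distrib]
    rfl
  rw [hfam']
  exact (hchain.comp_equiv _).linearIndependent_and_span_of_bot

/-- **Product basis used in the proof of Theorem 4.**
With the field tower of Lemma 1 (here `Kf e` plays the role of `F_e`), where
`{1, α_e^u, …, α_e^{u(p_e−1)}}` is a `K_{e−1}`-basis of `F_e` and
`{1, β_e, …, β_e^{s̄−1}}` is an `F_e`-basis of `K_e`, define for each `e` the set
`E_e = {β_e^j α_e^{u(j+t·s̄)} : 0 ≤ j < s̄, 0 ≤ t < (p_e−1)/s̄} ∪ {α_e^{u(p_e−1)} ∑_{j<s̄} β_e^j}`,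
whose elements are encoded by `Option (Fin s̄ × Fin ((p_e−1)/s̄))` (`none` encoding
the exceptional element).  Then the family
`(∏_e ξ_e) · (∏_e α_e^{u·w_e})`, for `ξ_e ∈ E_e` and `0 ≤ w_e ≤ s̄−1`, is an
`F`-basis of `K = K_n̄` (in particular its `s̄^n̄ ∏_e p_e` listed elements are
pairwise distinct and `F`-linearly independent). -/
theorem product_basis_theorem4
    (F Ω : Type*) [Field F] [Fintype F] [Field Ω] [IsAlgClosed Ω] [Algebra F Ω]
    (q nb sb u : ℕ) (hq : Fintype.card F = q) (hsb : 1 ≤ sb) (hu : 0 < u)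
    (p : ℕ → ℕ)
    (hp : ∀ e ∈ Finset.Icc 1 nb, (p e).Prime)
    (hpdistinct : ∀ e ∈ Finset.Icc 1 nb, ∀ e' ∈ Finset.Icc 1 nb, e ≠ e' → p e ≠ p e')
    (hpmod : ∀ e ∈ Finset.Icc 1 nb, sb ∣ (p e - 1))
    (α β : ℕ → Ω)
    (K Kf : ℕ → IntermediateField F Ω)
    (hK0 : K 0 = ⊥)
    (hKf : ∀ e ∈ Finset.Icc 1 nb,
      Kf e = K (e - 1) ⊔ IntermediateField.adjoin F {α e})
    (hK : ∀ e ∈ Finset.Icc 1 nb,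
      K e = Kf e ⊔ IntermediateField.adjoin F {β e})
    (hαbasis : ∀ e ∈ Finset.Icc 1 nb,
      (∀ c : Fin (p e) → Ω, (∀ i, c i ∈ K (e - 1)) →
        ∑ i, c i * (α e) ^ (u * i.1) = 0 → ∀ i, c i = 0) ∧
      (∀ x ∈ Kf e, ∃ c : Fin (p e) → Ω, (∀ i, c i ∈ K (e - 1)) ∧
        x = ∑ i, c i * (α e) ^ (u * i.1)))
    (hβbasis : ∀ e ∈ Finset.Icc 1 nb,
      (∀ c : Fin sb → Ω, (∀ i, c i ∈ Kf e) →
        ∑ i, c i * (β e) ^ i.1 = 0 → ∀ i, c i = 0) ∧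
      (∀ x ∈ K e, ∃ c : Fin sb → Ω, (∀ i, c i ∈ Kf e) ∧
        x = ∑ i, c i * (β e) ^ i.1))
    (fam : (((e : Fin nb) → Option (Fin sb × Fin ((p (e.1 + 1) - 1) / sb)))
      × (Fin nb → Fin sb)) → Ω)
    (hfam : ∀ ξw, fam ξw =
      (∏ e : Fin nb,
        (ξw.1 e).elim
          ((α (e.1 + 1)) ^ (u * (p (e.1 + 1) - 1)) *
            ∑ j ∈ Finset.range sb, (β (e.1 + 1)) ^ j)
          (fun jt => (β (e.1 + 1)) ^ (jt.1.1) *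
            (α (e.1 + 1)) ^ (u * (jt.1.1 + jt.2.1 * sb)))) *
      ∏ e : Fin nb, (α (e.1 + 1)) ^ (u * (ξw.2 e).1)) :
    LinearIndependent F fam ∧
      (Submodule.span F (Set.range fam) : Set Ω) = (K nb : Set Ω) :=
  product_basis_theorem4_general F Ω nb sb u p hp hpmod α β K Kf hK0 hKf hK hαbasis hβbasis fam hfam
end
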